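/- (Desargues' theorem, bracket form.) Let O, A, B, C, A', B', C', X, Y, Z be vectors in ℝ³ regarded as homogeneous coordinates of points of the real projective plane, and let T denote the family of ten index triples {O,A,A'}, {O,B,B'}, {O,C,C'}, {A,B,Z}, {A',B',Z}, {B,C,X}, {B',C',X}, {A,C,Y}, {A',C',Y}, {X,Y,Z}. Assume that every triple of distinct points among the ten that does NOT belong to T has nonzero bracket. If the brackets of the first nine triples of T vanish (the two triangles ABC and A'B'C' are perspective from the point O, and X, Y, Z are the intersections of corresponding sides), then also [X,Y,Z] = 0 (the two triangles are perspective from a line). -/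
import Mathlib


/-- The bracket `[A,B,C]`: the determinant of the 3×3 matrix whose columns are `A`, `B`, `C`. -/
noncomputable def bracket3 (A B C : Fin 3 → ℝ) : ℝ :=
  ((Matrix.of ![A, B, C]).transpose).det

/-- The ten collinear triples of the Desargues configuration, for points indexed
`O = 0, A = 1, B = 2, C = 3, A' = 4, B' = 5, C' = 6, X = 7, Y = 8, Z = 9`:
`{O,A,A'}, {O,B,B'}, {O,C,C'}, {A,B,Z}, {A',B',Z}, {B,C,X}, {B',C',X},
{A,C,Y}, {A',C',Y}, {X,Y,Z}`. -/
def desarguesTriples : Finset (Finset (Fin 10)) :=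
  { {0, 1, 4}, {0, 2, 5}, {0, 3, 6}, {1, 2, 9}, {4, 5, 9},
    {2, 3, 7}, {5, 6, 7}, {1, 3, 8}, {4, 6, 8}, {7, 8, 9} }

lemma bracket3_eq (A B C : Fin 3 → ℝ) :
    bracket3 A B C =
      A 0 * B 1 * C 2 - A 0 * B 2 * C 1 - A 1 * B 0 * C 2
        + A 1 * B 2 * C 0 + A 2 * B 0 * C 1 - A 2 * B 1 * C 0 := by
  rw [bracket3, Matrix.det_transpose, Matrix.det_fin_three]
  simp [Matrix.of_apply]

lemma cramer3 (P Q R V : Fin 3 → ℝ) (i : Fin 3) :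
    bracket3 P Q R * V i =
      bracket3 V Q R * P i + bracket3 P V R * Q i + bracket3 P Q V * R i := by
  simp only [bracket3_eq]
  fin_cases i <;>
    simp only [Fin.zero_eta, Fin.mk_one, show (⟨2, by norm_num⟩ : Fin 3) = 2 from rfl] <;> ring

lemma brkExpand (u v w X Y Z : Fin 3 → ℝ) (dX dY dZ s1 s2 t1 t2 r1 r2 : ℝ)
    (hX : ∀ i, dX * X i = s1 * u i + s2 * v i)
    (hY : ∀ i, dY * Y i = t1 * u i + t2 * w i)
    (hZ : ∀ i, dZ * Z i = r1 * v i + r2 * w i) :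
    dX * dY * dZ * bracket3 X Y Z = -(s1 * t2 * r1 + s2 * t1 * r2) * bracket3 u v w := by
  have hX' : (fun i => dX * X i) = fun i => s1 * u i + s2 * v i := funext hX
  have hY' : (fun i => dY * Y i) = fun i => t1 * u i + t2 * w i := funext hY
  have hZ' : (fun i => dZ * Z i) = fun i => r1 * v i + r2 * w i := funext hZ
  have e1 : bracket3 (fun i => dX * X i) (fun i => dY * Y i) (fun i => dZ * Z i)
      = dX * dY * dZ * bracket3 X Y Z := by
    simp only [bracket3_eq]; ring
  rw [hX', hY', hZ'] at e1
  rw [← e1]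
  simp only [bracket3_eq]; ring

/-- **Desargues' theorem** (bracket form).  Here `p 0, …, p 9` are the homogeneous
coordinate vectors of `O, A, B, C, A', B', C', X, Y, Z`.  If every triple of
distinct points not in the configuration family has nonzero bracket, and the first
nine configuration triples are collinear (the triangles are perspective from `O`,
with `X`, `Y`, `Z` the intersections of corresponding sides), then `X`, `Y`, `Z`
are collinear. -/
theorem desargues (p : Fin 10 → (Fin 3 → ℝ))
    (hnd : ∀ i j k : Fin 10, i ≠ j → i ≠ k → j ≠ k →
      ({i, j, k} : Finset (Fin 10)) ∉ desarguesTriples →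
      bracket3 (p i) (p j) (p k) ≠ 0)
    (hOAA' : bracket3 (p 0) (p 1) (p 4) = 0)
    (hOBB' : bracket3 (p 0) (p 2) (p 5) = 0)
    (hOCC' : bracket3 (p 0) (p 3) (p 6) = 0)
    (hABZ : bracket3 (p 1) (p 2) (p 9) = 0)
    (hA'B'Z : bracket3 (p 4) (p 5) (p 9) = 0)
    (hBCX : bracket3 (p 2) (p 3) (p 7) = 0)
    (hB'C'X : bracket3 (p 5) (p 6) (p 7) = 0)
    (hACY : bracket3 (p 1) (p 3) (p 8) = 0)
    (hA'C'Y : bracket3 (p 4) (p 6) (p 8) = 0) :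
    bracket3 (p 7) (p 8) (p 9) = 0 := by
  -- abbreviations for the coefficients
  set a1 := bracket3 (p 4) (p 1) (p 2) with ha1
  set a2 := bracket3 (p 0) (p 4) (p 2) with ha2
  set b1 := bracket3 (p 5) (p 2) (p 1) with hb1
  set b2 := bracket3 (p 0) (p 5) (p 1) with hb2
  set c1 := bracket3 (p 6) (p 3) (p 1) with hc1
  set c2 := bracket3 (p 0) (p 6) (p 1) with hc2
  set x1 := bracket3 (p 7) (p 3) (p 0) with hx1
  set x2 := bracket3 (p 2) (p 7) (p 0) with hx2
  set y1 := bracket3 (p 8) (p 3) (p 0) with hy1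
  set y2 := bracket3 (p 1) (p 8) (p 0) with hy2
  set z1 := bracket3 (p 9) (p 2) (p 0) with hz1
  set z2 := bracket3 (p 1) (p 9) (p 0) with hz2
  set D1 := bracket3 (p 0) (p 1) (p 2) with hD1
  set D2 := bracket3 (p 0) (p 2) (p 1) with hD2
  set D3 := bracket3 (p 0) (p 3) (p 1) with hD3
  set E := bracket3 (p 1) (p 2) (p 0) with hE
  set F := bracket3 (p 2) (p 3) (p 0) with hF
  set G := bracket3 (p 1) (p 3) (p 0) with hG
  -- decompositions via Cramer's rule
  have h4 : ∀ i, D1 * p 4 i = a1 * p 0 i + a2 * p 1 i := by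
    intro i
    have := cramer3 (p 0) (p 1) (p 2) (p 4) i
    rw [hOAA'] at this; linarith [this]
  have h5 : ∀ i, D2 * p 5 i = b1 * p 0 i + b2 * p 2 i := by
    intro i
    have := cramer3 (p 0) (p 2) (p 1) (p 5) i
    rw [hOBB'] at this; linarith [this]
  have h6 : ∀ i, D3 * p 6 i = c1 * p 0 i + c2 * p 3 i := by
    intro i
    have := cramer3 (p 0) (p 3) (p 1) (p 6) i
    rw [hOCC'] at this; linarith [this]
  have h7 : ∀ i, F * p 7 i = x1 * p 2 i + x2 * p 3 i := by
    intro i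
    have := cramer3 (p 2) (p 3) (p 0) (p 7) i
    rw [hBCX] at this; linarith [this]
  have h8 : ∀ i, G * p 8 i = y1 * p 1 i + y2 * p 3 i := by
    intro i
    have := cramer3 (p 1) (p 3) (p 0) (p 8) i
    rw [hACY] at this; linarith [this]
  have h9 : ∀ i, E * p 9 i = z1 * p 1 i + z2 * p 2 i := by
    intro i
    have := cramer3 (p 1) (p 2) (p 0) (p 9) i
    rw [hABZ] at this; linarith [this]
  -- nondegeneracy facts
  have na1 : a1 ≠ 0 := hnd 4 1 2 (by decide) (by decide) (by decide) (by decide)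
  have na2 : a2 ≠ 0 := hnd 0 4 2 (by decide) (by decide) (by decide) (by decide)
  have nb1 : b1 ≠ 0 := hnd 5 2 1 (by decide) (by decide) (by decide) (by decide)
  have nb2 : b2 ≠ 0 := hnd 0 5 1 (by decide) (by decide) (by decide) (by decide)
  have nc1 : c1 ≠ 0 := hnd 6 3 1 (by decide) (by decide) (by decide) (by decide)
  have nc2 : c2 ≠ 0 := hnd 0 6 1 (by decide) (by decide) (by decide) (by decide)
  have nOAB : bracket3 (p 0) (p 1) (p 2) ≠ 0 :=
    hnd 0 1 2 (by decide) (by decide) (by decide) (by decide)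
  have nOBC : bracket3 (p 0) (p 2) (p 3) ≠ 0 :=
    hnd 0 2 3 (by decide) (by decide) (by decide) (by decide)
  have nOAC : bracket3 (p 0) (p 1) (p 3) ≠ 0 :=
    hnd 0 1 3 (by decide) (by decide) (by decide) (by decide)
  have nCBA : bracket3 (p 3) (p 2) (p 1) ≠ 0 :=
    hnd 3 2 1 (by decide) (by decide) (by decide) (by decide)
  have nF : F ≠ 0 := hnd 2 3 0 (by decide) (by decide) (by decide) (by decide)
  have nG : G ≠ 0 := hnd 1 3 0 (by decide) (by decide) (by decide) (by decide)
  have nE : E ≠ 0 := hnd 1 2 0 (by decide) (by decide) (by decide) (by decide)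
  -- the three conditions from the primed lines
  have rel1 : a1 * b2 * z1 + a2 * b1 * z2 = 0 := by
    have e := brkExpand (p 0) (p 1) (p 2) (p 4) (p 5) (p 9) D1 D2 E a1 a2 b1 b2 z1 z2
      h4 h5 h9
    rw [hA'B'Z] at e
    have : -(a1 * b2 * z1 + a2 * b1 * z2) * bracket3 (p 0) (p 1) (p 2) = 0 := by
      rw [← e]; ring
    rcases mul_eq_zero.mp this with h | h
    · linarith
    · exact absurd h nOAB
  have rel2 : b1 * c2 * x1 + b2 * c1 * x2 = 0 := by
    have e := brkExpand (p 0) (p 2) (p 3) (p 5) (p 6) (p 7) D2 D3 F b1 b2 c1 c2 x1 x2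
      h5 h6 h7
    rw [hB'C'X] at e
    have : -(b1 * c2 * x1 + b2 * c1 * x2) * bracket3 (p 0) (p 2) (p 3) = 0 := by
      rw [← e]; ring
    rcases mul_eq_zero.mp this with h | h
    · linarith
    · exact absurd h nOBC
  have rel3 : a1 * c2 * y1 + a2 * c1 * y2 = 0 := by
    have e := brkExpand (p 0) (p 1) (p 3) (p 4) (p 6) (p 8) D1 D3 G a1 a2 c1 c2 y1 y2
      h4 h6 h8
    rw [hA'C'Y] at e
    have : -(a1 * c2 * y1 + a2 * c1 * y2) * bracket3 (p 0) (p 1) (p 3) = 0 := by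
      rw [← e]; ring
    rcases mul_eq_zero.mp this with h | h
    · linarith
    · exact absurd h nOAC
  -- combine
  have hsum : x1 * y2 * z1 + x2 * y1 * z2 = 0 := by
    have key : a1 * a2 * b1 * b2 * c1 * c2 * (x1 * y2 * z1 + x2 * y1 * z2) = 0 := by
      linear_combination (b1 * c2 * x1 * a2 * c1 * y2) * rel1 -
        (a2 * b1 * z2 * a2 * c1 * y2) * rel2 + (a2 * b1 * z2 * b2 * c1 * x2) * rel3
    have hK : a1 * a2 * b1 * b2 * c1 * c2 ≠ 0 := by
      exact mul_ne_zero (mul_ne_zero (mul_ne_zero (mul_ne_zero (mul_ne_zero na1 na2) nb1) nb2) nc1) nc2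
    exact (mul_eq_zero.mp key).resolve_left hK
  -- final expansion of [X,Y,Z]
  have hXexp : ∀ i, F * p 7 i = x2 * p 3 i + x1 * p 2 i := by
    intro i; linarith [h7 i]
  have hYexp : ∀ i, G * p 8 i = y2 * p 3 i + y1 * p 1 i := by
    intro i; linarith [h8 i]
  have hZexp : ∀ i, E * p 9 i = z2 * p 2 i + z1 * p 1 i := by
    intro i; linarith [h9 i]
  have efin := brkExpand (p 3) (p 2) (p 1) (p 7) (p 8) (p 9) F G E x2 x1 y2 y1 z2 z1
    hXexp hYexp hZexp
  have : F * G * E * bracket3 (p 7) (p 8) (p 9) = 0 := by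
    rw [efin]
    have : x2 * y1 * z2 + x1 * y2 * z1 = 0 := by linarith
    rw [show -(x2 * y1 * z2 + x1 * y2 * z1) = 0 by linarith]
    ring
  exact (mul_eq_zero.mp this).resolve_left (mul_ne_zero (mul_ne_zero nF nG) nE)
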